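/- Let a protocol-extraction bound be given: a deterministic (r(n), s(n), 1)-bounded Turing machine deciding a language L of padded pointer-jumping instances yields, for each m (with n̂ = 2^{m-1}, n = 2m·n̂ + m + 1, k = r(n)), a deterministic k-round two-party communication protocol for the pointer jumping function pj_{n̂,k+1} with total communication at most r(n)·(c·s(n) + log|Q|) bits. If moreover r(n) ∈ o(n/(log n)²) and r(n)·s(n) ∈ o(n/log n), then for sufficiently large m this communication is o(n̂) while k < n̂/log n̂, contradicting the Ω(n̂) lower bound on the deterministic k-round communication complexity of pj_{n̂,k+1}. Hence PJ_{r+1} ∉ ST(r(n), s(n), 1). -/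

import Mathlib

/-!
Along the input lengths `n = 2·m·n̂ + m + 1`, `n̂ = 2^(m-1)`, we have `log n ≥ m` and
`n ≤ 4·m·n̂`. Hence `r(n) = o(n/(log n)²)` gives `r(n) = o(n̂/log n̂)`, so the extracted
protocol eventually has fewer than `n̂/log n̂` rounds, while `r(n)·s(n) = o(n/log n)` makes
its cost `r(n)·(c·s(n) + log|Q|)` of order `o(n̂)`: this contradicts the Nisan–Wigderson
bound `Ω(n̂)`.
-/

open Filter Asymptotics

theorem Asymptotics.IsLittleO.eventually_lt_mul {α : Type*} {l : Filter α} {f g : α → ℝ}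
    (h : f =o[l] g) (hg : ∀ᶠ x in l, 0 < g x) {δ : ℝ} (hδ : 0 < δ) :
    ∀ᶠ x in l, f x < δ * g x := by
  filter_upwards [h.def (half_pos hδ), hg] with x hfx hgx
  rw [Real.norm_eq_abs, Real.norm_eq_abs, abs_of_pos hgx] at hfx
  nlinarith [le_abs_self (f x)]

/-- The length of an input `1^m # x y` of `pj_{n̂,k}` with `n̂ = 2^(m-1)`. -/
def pjInputLength (m : ℕ) : ℕ := 2 * m * 2 ^ (m - 1) + m + 1

theorem le_pjInputLength (m : ℕ) : m ≤ pjInputLength m := by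
  unfold pjInputLength; omega

theorem tendsto_pjInputLength : Tendsto pjInputLength atTop atTop :=
  tendsto_atTop_mono le_pjInputLength tendsto_id

theorem pjInputLength_le {m : ℕ} (hm : 1 ≤ m) :
    (pjInputLength m : ℝ) ≤ 4 * m * (2 ^ (m - 1) : ℕ) := by
  have hpow : (1 : ℝ) ≤ (2 ^ (m - 1) : ℕ) := by exact_mod_cast Nat.one_le_two_pow
  have hm' : (1 : ℝ) ≤ m := by exact_mod_cast hm
  unfold pjInputLength
  push_cast at hpow ⊢
  nlinarith

theorem logb_two_pow_pred {m : ℕ} (hm : 1 ≤ m) :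
    Real.logb 2 ((2 ^ (m - 1) : ℕ) : ℝ) = m - 1 := by
  rw [Nat.cast_pow, Nat.cast_ofNat, Real.logb_pow, Real.logb_self_eq_one one_lt_two,
    Nat.cast_pred hm, mul_one]

theorem le_logb_pjInputLength {m : ℕ} (hm : 1 ≤ m) :
    (m : ℝ) ≤ Real.logb 2 (pjInputLength m) := by
  have hle : 2 ^ m ≤ pjInputLength m := by
    obtain ⟨k, rfl⟩ := Nat.exists_eq_add_of_le' hm
    unfold pjInputLength
    rw [Nat.add_sub_cancel, pow_succ]
    nlinarith [Nat.two_pow_pos k]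
  rw [Real.le_logb_iff_rpow_le one_lt_two (by exact_mod_cast (Nat.two_pow_pos m).trans_le hle),
    Real.rpow_natCast]
  exact_mod_cast hle

theorem isBigO_div_logb_sq_pjInputLength :
    (fun m => (pjInputLength m : ℝ) / Real.logb 2 (pjInputLength m) ^ 2) =O[atTop]
      fun m => ((2 ^ (m - 1) : ℕ) : ℝ) / Real.logb 2 ((2 ^ (m - 1) : ℕ) : ℝ) := by
  refine IsBigO.of_bound 4 ?_
  filter_upwards [eventually_ge_atTop 2] with m hm
  have hm' : (2 : ℝ) ≤ m := by exact_mod_cast hm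
  have hL := le_logb_pjInputLength (m := m) (by omega)
  rw [logb_two_pow_pred (by omega), Real.norm_of_nonneg (by positivity),
    Real.norm_of_nonneg (div_nonneg (by positivity) (by linarith))]
  calc (pjInputLength m : ℝ) / Real.logb 2 (pjInputLength m) ^ 2
      ≤ 4 * m * (2 ^ (m - 1) : ℕ) / (m : ℝ) ^ 2 := by
        gcongr
        exact pjInputLength_le (by omega)
    _ = 4 * (((2 ^ (m - 1) : ℕ) : ℝ) / m) := by field_simp
    _ ≤ 4 * (((2 ^ (m - 1) : ℕ) : ℝ) / (m - 1)) := by gcongr <;> linarith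

theorem isBigO_div_logb_pjInputLength :
    (fun m => (pjInputLength m : ℝ) / Real.logb 2 (pjInputLength m)) =O[atTop]
      fun m => ((2 ^ (m - 1) : ℕ) : ℝ) := by
  refine IsBigO.of_bound 4 ?_
  filter_upwards [eventually_ge_atTop 1] with m hm
  have hm' : (1 : ℝ) ≤ m := by exact_mod_cast hm
  have hL := le_logb_pjInputLength hm
  rw [Real.norm_of_nonneg (div_nonneg (by positivity) (by linarith)),
    Real.norm_of_nonneg (by positivity)]
  calc (pjInputLength m : ℝ) / Real.logb 2 (pjInputLength m)
      ≤ 4 * m * (2 ^ (m - 1) : ℕ) / m := by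
        gcongr
        exact pjInputLength_le hm
    _ = 4 * ((2 ^ (m - 1) : ℕ) : ℝ) := by field_simp

theorem isBigO_div_logb_two_pow_pred :
    (fun m => ((2 ^ (m - 1) : ℕ) : ℝ) / Real.logb 2 ((2 ^ (m - 1) : ℕ) : ℝ)) =O[atTop]
      fun m => ((2 ^ (m - 1) : ℕ) : ℝ) := by
  refine IsBigO.of_bound 1 ?_
  filter_upwards [eventually_ge_atTop 2] with m hm
  have hm' : (2 : ℝ) ≤ m := by exact_mod_cast hm
  rw [logb_two_pow_pred (by omega), Real.norm_of_nonneg (div_nonneg (by positivity) (by linarith)),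
    Real.norm_of_nonneg (by positivity), one_mul]
  exact div_le_self (by positivity) (by linarith)

theorem eventually_div_logb_two_pow_pred_pos :
    ∀ᶠ m : ℕ in atTop, 0 < ((2 ^ (m - 1) : ℕ) : ℝ) / Real.logb 2 ((2 ^ (m - 1) : ℕ) : ℝ) := by
  filter_upwards [eventually_ge_atTop 2] with m hm
  have hm' : (2 : ℝ) ≤ m := by exact_mod_cast hm
  rw [logb_two_pow_pred (by omega)]
  exact div_pos (by positivity) (by linarith)

theorem tendsto_two_pow_pred : Tendsto (fun m : ℕ => 2 ^ (m - 1)) atTop atTop :=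
  (tendsto_pow_atTop_atTop_of_one_lt one_lt_two).comp (tendsto_sub_atTop_nat 1)

/-- lower bound for padded pointer jumping on one external tape (Lemma 5(b)).
`ST r s 1` is the (abstract) class of languages decided by deterministic
`(r,s,1)`-bounded machines, `PJ` is the language `PJ_{r+1}` of padded pointer-jumping
instances, and `CC n̂ k` is the deterministic `k`-round communication complexity of the
pointer jumping function `pj_{n̂,k+1}`.  Hypotheses: the Nisan–Wigderson lower bound
(`CC n̂ k = Ω(n̂)` whenever `k < n̂ / log n̂`); the protocol extraction (a machine for `PJ`
yields, for each `m` with `n̂ = 2^(m-1)` and `n = 2·m·n̂ + m + 1`, `k = r n`, a `k`-round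
protocol of cost at most `r(n)·(c·s(n) + log|Q|)`); and `r(n) ∈ o(n/(log n)²)`,
`r(n)·s(n) ∈ o(n/log n)`.  Conclusion: `PJ ∉ ST(r, s, 1)`. -/
theorem PJ_not_in_ST_one_tape {Lang : Type*}
    (ST : (ℕ → ℕ) → (ℕ → ℕ) → ℕ → Set Lang) (PJ : Lang)
    (r s : ℕ → ℕ) (CC : ℕ → ℕ → ℝ) (c logQ : ℝ)
    (hlb : ∃ δ : ℝ, 0 < δ ∧ ∀ᶠ nh : ℕ in atTop, ∀ k : ℕ,
      (k : ℝ) < (nh : ℝ) / Real.logb 2 nh → δ * (nh : ℝ) ≤ CC nh k)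
    (hext : PJ ∈ ST r s 1 → ∀ m : ℕ, 1 ≤ m →
      CC (2 ^ (m - 1)) (r (2 * m * 2 ^ (m - 1) + m + 1)) ≤
        (r (2 * m * 2 ^ (m - 1) + m + 1) : ℝ) *
          (c * (s (2 * m * 2 ^ (m - 1) + m + 1) : ℝ) + logQ))
    (ho1 : (fun n : ℕ => (r n : ℝ)) =o[atTop]
      fun n : ℕ => (n : ℝ) / (Real.logb 2 n) ^ 2)
    (ho2 : (fun n : ℕ => (r n : ℝ) * (s n : ℝ)) =o[atTop]
      fun n : ℕ => (n : ℝ) / Real.logb 2 n) :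
    PJ ∉ ST r s 1 := by
  intro hPJ
  obtain ⟨δ, hδ, hlb⟩ := hlb
  have hr := (ho1.comp_tendsto tendsto_pjInputLength).trans_isBigO
    isBigO_div_logb_sq_pjInputLength
  have hrs := (ho2.comp_tendsto tendsto_pjInputLength).trans_isBigO
    isBigO_div_logb_pjInputLength
  have hrounds : ∀ᶠ m in atTop, (r (pjInputLength m) : ℝ) <
      ((2 ^ (m - 1) : ℕ) : ℝ) / Real.logb 2 ((2 ^ (m - 1) : ℕ) : ℝ) :=
    (hr.eventually_lt_mul eventually_div_logb_two_pow_pred_pos one_pos).mono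
      fun _ h => by rwa [one_mul] at h
  have hcost : (fun m => (r (pjInputLength m) : ℝ) * (c * s (pjInputLength m) + logQ))
      =o[atTop] fun m => ((2 ^ (m - 1) : ℕ) : ℝ) := by
    refine ((hrs.const_mul_left c).add
      ((hr.trans_isBigO isBigO_div_logb_two_pow_pred).const_mul_left logQ)).congr_left
      fun m => ?_
    simp only [Function.comp_apply]
    ring
  obtain ⟨m, hm, hk, hlow, hup⟩ := ((eventually_ge_atTop 1).and <| hrounds.and <|
    (tendsto_two_pow_pred.eventually hlb).and <| hcost.eventually_lt_mul (by simp) hδ).exists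
  exact (hup.trans_le' (hext hPJ m hm)).not_ge (hlow _ hk)
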